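/- Consider the 6-dimensional real Lie algebra g̃ ≅ g_{5.7}^{1,-1,-1} ⊕ ℝ with basis X₁,…,X₆ and nonzero brackets [X₁,X₅] = pX₁, [X₂,X₅] = pX₂, [X₃,X₅] = -pX₃, [X₄,X₅] = -pX₄ for some p ≠ 0. Its Chevalley–Eilenberg cohomology satisfies b₁ = 2, b₂ = 5, b₃ = 8, with H¹ = ⟨α⁵, α⁶⟩, H² = ⟨α¹³, α¹⁴, α²³, α²⁴, α⁵⁶⟩. -/

import Mathlib

/-!
STATEMENT 11: The Lie algebra g̃ ≅ g_{5.7}^{1,-1,-1} ⊕ ℝ with nonzero brackets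
[X₁,X₅] = pX₁, [X₂,X₅] = pX₂, [X₃,X₅] = −pX₃, [X₄,X₅] = −pX₄ (p ≠ 0) has
Chevalley–Eilenberg Betti numbers b₁ = 2, b₂ = 5, b₃ = 8, with H¹ = ⟨α⁵,α⁶⟩,
H² = ⟨α¹³,α¹⁴,α²³,α²⁴,α⁵⁶⟩.

The Chevalley–Eilenberg differential satisfies dα¹ = −pα¹∧α⁵, dα² = −pα²∧α⁵,
dα³ = pα³∧α⁵, dα⁴ = pα⁴∧α⁵, dα⁵ = dα⁶ = 0; the complex is modeled concretely below
(indices shifted down by one).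
-/

open Finset Module

/-- The exterior algebra on six degree-one generators α¹,…,α⁶, as coordinates on the
basis of increasing wedge monomials indexed by subsets of `Fin 6`. -/
abbrev Lam : Type := Finset (Fin 6) → ℝ

/-- The basis monomial α^S. -/
noncomputable def gen (S : Finset (Fin 6)) : Lam := Pi.single S 1

/-- Koszul sign when interleaving (the increasing enumerations of) `T` and `U`:
(−1) to the number of inversions. -/
def koszulSign (T U : Finset (Fin 6)) : ℝ :=
  (-1 : ℝ) ^ (((T ×ˢ U).filter fun p => p.2 < p.1).card)

/-- The wedge (exterior) product in coordinates. -/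
noncomputable def wedge (f h : Lam) : Lam := fun S =>
  ∑ T ∈ S.powerset, koszulSign T (S \ T) * f T * h (S \ T)

/-- The Chevalley–Eilenberg differential: the unique antiderivation with dαⁱ = g i,
given on the basis monomial α^S by d α^S = Σ_{i ∈ S} (−1)^{#{j ∈ S | j < i}} (g i) ∧ α^{S∖i}. -/
noncomputable def ceDiff (g : Fin 6 → Lam) : Lam →ₗ[ℝ] Lam :=
  (Pi.basisFun ℝ (Finset (Fin 6))).constr ℝ fun S =>
    ∑ i ∈ S, ((-1 : ℝ) ^ ((S.filter fun j => j < i).card)) • wedge (g i) (gen (S.erase i))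

/-- The subspace Λᵏ of homogeneous elements of degree `k`. -/
def degSub (k : ℕ) : Submodule ℝ Lam where
  carrier := {f | ∀ S : Finset (Fin 6), S.card ≠ k → f S = 0}
  add_mem' := by
    intro f g hf hg S hS
    simp only [Pi.add_apply, hf S hS, hg S hS, add_zero]
  zero_mem' := by intro S hS; rfl
  smul_mem' := by
    intro c f hf S hS
    simp only [Pi.smul_apply, hf S hS, smul_zero]

/-- Closed k-forms. -/
noncomputable def Zspace (D : Lam →ₗ[ℝ] Lam) (k : ℕ) : Submodule ℝ Lam :=
  degSub k ⊓ LinearMap.ker D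

/-- Exact k-forms (the image of the (k−1)-forms under the differential). -/
noncomputable def Bspace (D : Lam →ₗ[ℝ] Lam) (k : ℕ) : Submodule ℝ Lam :=
  (degSub (k - 1)).map D

/-- Generator differentials (0-indexed). -/
noncomputable def gDiff (p : ℝ) : Fin 6 → Lam :=
  ![(-p) • gen {0, 4}, (-p) • gen {1, 4}, p • gen {2, 4}, p • gen {3, 4}, 0, 0]

/-!
In the basis of monomials the differential is monomial: writing indices from 0 as in the
definitions, `d α^S = p · c(S) · α^{S ∪ {4}}`, where `c(S) = 0` if `4 ∈ S` and otherwise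
`c(S) = ±∑_{i ∈ S} wᵢ` with `w = (-1, -1, 1, 1, 0, 0)` the weights of `ad X₅ / p` on the dual basis.
For such a map the closed `k`-forms are spanned by the monomials of degree `k` with `c(S) = 0`,
and, since `S ↦ S ∪ {4}` is injective on the monomials not containing `4`, the exact `k`-forms are
spanned by the `α^{S ∪ {4}}` with `|S| = k - 1` and `c(S) ≠ 0`. Counting monomials gives the
Betti numbers and the listed representatives.
-/

namespace Pi

variable {ι K : Type*} [Fintype ι] [Field K]

theorem spanSubset_sup_spanSubset (s t : Set ι) :
    spanSubset K s ⊔ spanSubset K t = spanSubset K (s ∪ t) := by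
  rw [spanSubset, spanSubset, spanSubset, Set.image_union, Submodule.span_union]

theorem finrank_spanSubset_coe (s : Finset ι) : finrank K (spanSubset K (s : Set ι)) = s.card := by
  rw [dim_spanSubset, Set.ncard_coe_finset]

variable [DecidableEq ι] {D : (ι → K) →ₗ[K] ι → K} {c : ι → K} {σ : ι → ι}

theorem single_mem_spanSubset {s : Set ι} {i : ι} (hi : i ∈ s) :
    Pi.single i (1 : K) ∈ spanSubset K s :=
  Submodule.subset_span ⟨i, hi, basisFun_apply K ι i⟩

section Monomial

variable (hD : ∀ i, D (Pi.single i 1) = c i • Pi.single (σ i) 1)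
include hD

theorem apply_eq_of_monomial (hσ : Set.InjOn σ {i | c i ≠ 0}) (f : ι → K) {j : ι}
    (hj : c j ≠ 0) : D f (σ j) = c j * f j := by
  conv_lhs => rw [← Finset.univ_sum_single f]
  have hsingle : ∀ i, Pi.single i (f i) = f i • Pi.single i (1 : K) := fun i => by
    rw [← Pi.single_smul, smul_eq_mul, mul_one]
  simp only [hsingle, map_sum, map_smul, hD, Finset.sum_apply, Pi.smul_apply, smul_eq_mul]
  rw [Finset.sum_eq_single j]
  · rw [Pi.single_eq_same]; ring
  · intro i _ hij
    by_cases hi : c i = 0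
    · simp [hi]
    · rw [Pi.single_eq_of_ne (fun h => hij (hσ hi hj h.symm)), mul_zero, mul_zero]
  · simp

theorem spanSubset_inf_ker_of_monomial (hσ : Set.InjOn σ {i | c i ≠ 0}) (s : Set ι) :
    spanSubset K s ⊓ LinearMap.ker D = spanSubset K {i ∈ s | c i = 0} := by
  apply le_antisymm
  · rintro f ⟨hfs, hfD⟩
    rw [SetLike.mem_coe, mem_spanSubset_iff] at hfs
    rw [mem_spanSubset_iff]
    intro i hi
    by_cases his : i ∈ s
    · have hci : c i ≠ 0 := fun h => hi ⟨his, h⟩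
      have := apply_eq_of_monomial hD hσ f hci
      rw [LinearMap.mem_ker.1 hfD, Pi.zero_apply] at this
      exact (mul_eq_zero.1 this.symm).resolve_left hci
    · exact hfs i his
  · rw [spanSubset, Submodule.span_le]
    rintro _ ⟨i, ⟨his, hci⟩, rfl⟩
    rw [basisFun_apply]
    refine ⟨single_mem_spanSubset his, ?_⟩
    rw [SetLike.mem_coe, LinearMap.mem_ker, hD, hci, zero_smul]

theorem map_spanSubset_of_monomial (s : Set ι) :
    (spanSubset K s).map D = spanSubset K (σ '' {i ∈ s | c i ≠ 0}) := by
  rw [spanSubset, Submodule.map_span]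
  apply le_antisymm
  · rw [Submodule.span_le]
    rintro _ ⟨_, ⟨i, his, rfl⟩, rfl⟩
    rw [basisFun_apply, hD]
    by_cases hci : c i = 0
    · rw [hci, zero_smul]; exact zero_mem _
    · exact Submodule.smul_mem _ _ (single_mem_spanSubset ⟨i, ⟨his, hci⟩, rfl⟩)
  · rw [spanSubset, Submodule.span_le]
    rintro _ ⟨_, ⟨i, ⟨his, hci⟩, rfl⟩, rfl⟩
    have : Pi.single (σ i) (1 : K) = (c i)⁻¹ • D (Pi.single i 1) := by
      rw [hD, smul_smul, inv_mul_cancel₀ hci, one_smul]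
    rw [basisFun_apply, this]
    exact Submodule.smul_mem _ _
      (Submodule.subset_span ⟨_, ⟨i, his, rfl⟩, by rw [basisFun_apply]⟩)

end Monomial

end Pi

theorem wedge_smul_left (c : ℝ) (f h : Lam) : wedge (c • f) h = c • wedge f h := by
  funext S
  simp only [wedge, Pi.smul_apply, smul_eq_mul, Finset.mul_sum]
  exact Finset.sum_congr rfl fun T _ => by ring

theorem wedge_gen_gen (A B : Finset (Fin 6)) :
    wedge (gen A) (gen B) = fun S => if A ⊆ S ∧ S \ A = B then koszulSign A B else 0 := by
  funext S
  by_cases hAS : A ⊆ S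
  · rw [wedge, Finset.sum_eq_single_of_mem A (Finset.mem_powerset.2 hAS)]
    · by_cases hSA : S \ A = B <;> simp [gen, hAS, hSA]
    · intro T _ hTA
      simp [gen, hTA]
  · refine (Finset.sum_eq_zero fun T hT => ?_).trans (if_neg fun h => hAS h.1).symm
    have hTA : T ≠ A := fun h => hAS (h ▸ Finset.mem_powerset.1 hT)
    simp [gen, hTA]

theorem wedge_gen_gen_of_disjoint {A B : Finset (Fin 6)} (h : Disjoint A B) :
    wedge (gen A) (gen B) = koszulSign A B • gen (A ∪ B) := by
  rw [wedge_gen_gen]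
  funext S
  by_cases hS : S = A ∪ B
  · subst hS
    simp [gen, Finset.union_sdiff_cancel_left h]
  · have hAS : ¬ (A ⊆ S ∧ S \ A = B) := fun ⟨h1, h2⟩ =>
      hS (by rw [← h2, Finset.union_sdiff_of_subset h1])
    simp [gen, hS, hAS]

theorem wedge_gen_gen_of_not_disjoint {A B : Finset (Fin 6)} (h : ¬ Disjoint A B) :
    wedge (gen A) (gen B) = 0 := by
  rw [wedge_gen_gen]
  funext S
  rw [if_neg, Pi.zero_apply]
  rintro ⟨-, rfl⟩
  exact h Finset.disjoint_sdiff

theorem ceDiff_gen (g : Fin 6 → Lam) (S : Finset (Fin 6)) :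
    ceDiff g (gen S) =
      ∑ i ∈ S, ((-1 : ℝ) ^ #{j ∈ S | j < i}) • wedge (g i) (gen (S.erase i)) := by
  rw [ceDiff, gen, ← Pi.basisFun_apply, Basis.constr_basis]

def adWeight : Fin 6 → ℤ := ![-1, -1, 1, 1, 0, 0]

theorem gDiff_eq (p : ℝ) (i : Fin 6) : gDiff p i = (p * adWeight i) • gen {i, 4} := by
  fin_cases i <;> simp [gDiff, adWeight]

def ceCoeff (S : Finset (Fin 6)) : ℤ :=
  if 4 ∈ S then 0 else
    ∑ i ∈ S, (-1) ^ #{j ∈ S | j < i} * adWeight i *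
      (-1) ^ #{q ∈ ({i, 4} : Finset (Fin 6)) ×ˢ S.erase i | q.2 < q.1}

-- Checked over all 64 monomials; conceptually, all terms of `ceCoeff S` carry the same sign.
theorem ceCoeff_eq_zero_iff (S : Finset (Fin 6)) :
    ceCoeff S = 0 ↔ 4 ∈ S ∨ ∑ i ∈ S, adWeight i = 0 := by
  revert S; decide

theorem ceDiff_gDiff_gen (p : ℝ) (S : Finset (Fin 6)) :
    ceDiff (gDiff p) (gen S) = (p * ceCoeff S) • gen (insert 4 S) := by
  rw [ceDiff_gen]
  by_cases h4 : 4 ∈ S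
  · rw [ceCoeff, if_pos h4, Int.cast_zero, mul_zero, zero_smul]
    refine Finset.sum_eq_zero fun i hi => ?_
    rw [gDiff_eq, wedge_smul_left]
    by_cases hi4 : i = 4
    · simp [hi4, adWeight]
    · rw [wedge_gen_gen_of_not_disjoint, smul_zero, smul_zero]
      exact Finset.not_disjoint_iff.2 ⟨4, by simp, Finset.mem_erase.2 ⟨Ne.symm hi4, h4⟩⟩
  · rw [ceCoeff, if_neg h4, Int.cast_sum, Finset.mul_sum, Finset.sum_smul]
    refine Finset.sum_congr rfl fun i hi => ?_
    have hdisj : Disjoint ({i, 4} : Finset (Fin 6)) (S.erase i) := by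
      simp [Finset.disjoint_left, h4]
    have hunion : {i, 4} ∪ S.erase i = insert 4 S := by
      rw [Finset.insert_union, ← Finset.insert_eq, Finset.insert_comm, Finset.insert_erase hi]
    rw [gDiff_eq, wedge_smul_left, wedge_gen_gen_of_disjoint hdisj, hunion, smul_smul, smul_smul]
    congr 1
    push_cast [koszulSign]
    ring

theorem degSub_eq_spanSubset (k : ℕ) : degSub k = Pi.spanSubset ℝ {S | S.card = k} := by
  ext f
  rw [Pi.mem_spanSubset_iff]
  rfl

theorem insert_four_injOn (p : ℝ) :
    Set.InjOn (insert 4) {S : Finset (Fin 6) | p * ceCoeff S ≠ 0} := by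
  have h4 : ∀ {S : Finset (Fin 6)}, p * ceCoeff S ≠ 0 → 4 ∉ S := fun hS h4 =>
    hS (by rw [(ceCoeff_eq_zero_iff _).2 (Or.inl h4), Int.cast_zero, mul_zero])
  intro S hS T hT hST
  rw [← Finset.erase_insert (h4 hS), hST, Finset.erase_insert (h4 hT)]

def closedMonomials (k : ℕ) : Finset (Finset (Fin 6)) :=
  {S | S.card = k ∧ (4 ∈ S ∨ ∑ i ∈ S, adWeight i = 0)}

def exactMonomials (k : ℕ) : Finset (Finset (Fin 6)) :=
  ({S | S.card = k - 1 ∧ 4 ∉ S ∧ ∑ i ∈ S, adWeight i ≠ 0} : Finset _).image (insert 4)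

theorem zspace_eq {p : ℝ} (hp : p ≠ 0) (k : ℕ) :
    Zspace (ceDiff (gDiff p)) k = Pi.spanSubset ℝ ↑(closedMonomials k) := by
  rw [Zspace, degSub_eq_spanSubset,
    Pi.spanSubset_inf_ker_of_monomial (ceDiff_gDiff_gen p) (insert_four_injOn p)]
  congr 1
  ext S
  simp [closedMonomials, hp, ceCoeff_eq_zero_iff]

theorem bspace_eq {p : ℝ} (hp : p ≠ 0) (k : ℕ) :
    Bspace (ceDiff (gDiff p)) k = Pi.spanSubset ℝ ↑(exactMonomials k) := by
  rw [Bspace, degSub_eq_spanSubset, Pi.map_spanSubset_of_monomial (ceDiff_gDiff_gen p)]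
  congr 1
  ext S
  simp [exactMonomials, hp, ceCoeff_eq_zero_iff]

theorem spanSubset_eq_sup_span_gen {a b c : Finset (Finset (Fin 6))} (h : a = b ∪ c) :
    Pi.spanSubset ℝ ↑a = Pi.spanSubset ℝ ↑b ⊔ Submodule.span ℝ (gen '' ↑c) := by
  have hgen : Submodule.span ℝ (gen '' ↑c) = Pi.spanSubset ℝ ↑c := by
    simp only [Pi.spanSubset, Pi.basisFun_apply]
    rfl
  rw [hgen, Pi.spanSubset_sup_spanSubset, h, Finset.coe_union]

theorem cohomology_g57_oplus_R (p : ℝ) (hp : p ≠ 0) :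
    (finrank ℝ (Zspace (ceDiff (gDiff p)) 1) = finrank ℝ (Bspace (ceDiff (gDiff p)) 1) + 2 ∧
      Zspace (ceDiff (gDiff p)) 1 = Bspace (ceDiff (gDiff p)) 1 ⊔
        Submodule.span ℝ {gen {4}, gen {5}}) ∧
    (finrank ℝ (Zspace (ceDiff (gDiff p)) 2) = finrank ℝ (Bspace (ceDiff (gDiff p)) 2) + 5 ∧
      Zspace (ceDiff (gDiff p)) 2 = Bspace (ceDiff (gDiff p)) 2 ⊔
        Submodule.span ℝ {gen {0, 2}, gen {0, 3}, gen {1, 2}, gen {1, 3}, gen {4, 5}}) ∧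
    finrank ℝ (Zspace (ceDiff (gDiff p)) 3) = finrank ℝ (Bspace (ceDiff (gDiff p)) 3) + 8 := by
  have hpair : ({gen {4}, gen {5}} : Set Lam) = gen '' ↑({{4}, {5}} : Finset (Finset (Fin 6))) := by
    simp [Set.image_insert_eq]
  have hquint : ({gen {0, 2}, gen {0, 3}, gen {1, 2}, gen {1, 3}, gen {4, 5}} : Set Lam) =
      gen '' ↑({{0, 2}, {0, 3}, {1, 2}, {1, 3}, {4, 5}} : Finset (Finset (Fin 6))) := by
    simp [Set.image_insert_eq]
  refine ⟨⟨?_, ?_⟩, ⟨?_, ?_⟩, ?_⟩ <;> rw [zspace_eq hp, bspace_eq hp]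
  · rw [Pi.finrank_spanSubset_coe, Pi.finrank_spanSubset_coe]; decide
  · rw [hpair]; exact spanSubset_eq_sup_span_gen (by decide)
  · rw [Pi.finrank_spanSubset_coe, Pi.finrank_spanSubset_coe]; decide
  · rw [hquint]; exact spanSubset_eq_sup_span_gen (by decide)
  · rw [Pi.finrank_spanSubset_coe, Pi.finrank_spanSubset_coe]; decide
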